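/- Let d ≥ 2, let b be a Bloch function on the open unit ball B of ℝ^d, let x be a point of the unit sphere, and let M > 0, c₁ > 0. Suppose there are sequences (αₙ)_{n≥0} and (βₙ)_{n≥1} in [0,1) with α₀ = 0, αₙ < β_{n+1} < α_{n+1} for all n, and αₙ → 1, such that for all n ≥ 0: (i) ∫_{β_{n+1}}^{α_{n+1}} |∇b(sx)| ds ≤ c₁M; (ii) ∫_{αₙ}^{β_{n+1}} |∇b(sx)| ds ≤ c₁M; (iii) b(αₙ x) − b(0) ≤ −nM/2; and (iv) for every s ∈ [αₙ, α_{n+1}], b(sx) − b(0) ≤ −nM/2 + 2c₁M. Then ∫_0^1 |∇b(sx)| e^{b(sx)} ds ≤ 2 e^{b(0)+2c₁M} c₁M ∑_{n=0}^∞ e^{−nM/2} < ∞. -/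
import Mathlib


open MeasureTheory Metric

/-- A function is harmonic on the open unit ball of `ℝ^d`: it is twice continuously
differentiable there and its Laplacian vanishes. -/
def HarmonicOnBall (d : ℕ) (f : EuclideanSpace ℝ (Fin d) → ℝ) : Prop :=
  ContDiffOn ℝ 2 f (ball (0 : EuclideanSpace ℝ (Fin d)) 1) ∧
  ∀ z ∈ ball (0 : EuclideanSpace ℝ (Fin d)) 1,
    ∑ i : Fin d,
      iteratedFDeriv ℝ 2 f z ![EuclideanSpace.single i 1, EuclideanSpace.single i 1] = 0

/-- A Bloch function on the open unit ball of `ℝ^d`: a harmonic function with finite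
Bloch seminorm `sup_{z ∈ B} |∇b(z)| (1 - |z|)`. -/
def BlochOnBall (d : ℕ) (b : EuclideanSpace ℝ (Fin d) → ℝ) : Prop :=
  HarmonicOnBall d b ∧
  ∃ L : ℝ, ∀ z ∈ ball (0 : EuclideanSpace ℝ (Fin d)) 1,
    ‖fderiv ℝ b z‖ * (1 - ‖z‖) ≤ L
/-- Collecting-the-information step: given points `αₙ, βₙ` on a radius `[0,x]` along which
the variation of the Bloch function `b` is controlled and `b` decays linearly, the radial
integral `∫₀¹ |∇b(sx)| e^{b(sx)} ds` is bounded by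
`2 e^{b(0) + 2c₁M} c₁ M ∑ₙ e^{-nM/2}` (in particular it is finite). -/
theorem collecting_information (d : ℕ) (hd : 2 ≤ d)
    (b : EuclideanSpace ℝ (Fin d) → ℝ) (hb : BlochOnBall d b)
    (x : EuclideanSpace ℝ (Fin d)) (hx : ‖x‖ = 1)
    (M c₁ : ℝ) (hM : 0 < M) (hc₁ : 0 < c₁)
    (α β : ℕ → ℝ)
    (hα0 : α 0 = 0)
    (hαmem : ∀ n, α n ∈ Set.Ico (0 : ℝ) 1)
    (hβmem : ∀ n, β (n + 1) ∈ Set.Ico (0 : ℝ) 1)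
    (horder : ∀ n, α n < β (n + 1) ∧ β (n + 1) < α (n + 1))
    (hlim : Filter.Tendsto α Filter.atTop (nhds 1))
    (hvar₁ : ∀ n, (∫ s in (β (n + 1))..(α (n + 1)), ‖fderiv ℝ b (s • x)‖) ≤ c₁ * M)
    (hvar₂ : ∀ n, (∫ s in (α n)..(β (n + 1)), ‖fderiv ℝ b (s • x)‖) ≤ c₁ * M)
    (hdecay : ∀ n : ℕ, b (α n • x) - b 0 ≤ -(n * M / 2))
    (hseg : ∀ n : ℕ, ∀ s ∈ Set.Icc (α n) (α (n + 1)),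
      b (s • x) - b 0 ≤ -(n * M / 2) + 2 * c₁ * M) :
    ∫⁻ s in Set.Ioc (0 : ℝ) 1,
        ENNReal.ofReal (‖fderiv ℝ b (s • x)‖ * Real.exp (b (s • x)))
      ≤ ENNReal.ofReal
          (2 * Real.exp (b 0 + 2 * c₁ * M) * c₁ * M *
            ∑' n : ℕ, Real.exp (-(n * M / 2))) := by

  obtain ⟨⟨hC2, -⟩, -⟩ := hb
  set g : ℝ → ℝ := fun s => ‖fderiv ℝ b (s • x)‖ with hgdef
  have hg0 : ∀ s, 0 ≤ g s := fun s => norm_nonneg _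
  -- measurability of g
  have hmeas : Measurable g := by
    have : Measurable fun s : ℝ => fderiv ℝ b (s • x) :=
      (measurable_fderiv ℝ b).comp (by fun_prop)
    exact this.norm
  -- points on the radius are in the ball
  have hmem1 : ∀ s : ℝ, 0 ≤ s → s < 1 → s • x ∈ ball (0 : EuclideanSpace ℝ (Fin d)) 1 := by
    intro s h0 h1
    rw [mem_ball_zero_iff, norm_smul, hx, mul_one, Real.norm_eq_abs, abs_of_nonneg h0]
    exact h1
  have hcont : ContinuousOn (fderiv ℝ b) (ball (0 : EuclideanSpace ℝ (Fin d)) 1) :=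
    hC2.continuousOn_fderiv_of_isOpen isOpen_ball (by norm_num)
  have hle : ∀ n, α n ≤ α (n + 1) := fun n =>
    le_of_lt ((horder n).1.trans (horder n).2)
  -- continuity/integrability on segments
  have hcontg : ∀ n, ContinuousOn g (Set.Icc (α n) (α (n + 1))) := by
    intro n
    have hmaps : ∀ s ∈ Set.Icc (α n) (α (n + 1)),
        s • x ∈ ball (0 : EuclideanSpace ℝ (Fin d)) 1 := by
      intro s hs
      exact hmem1 s ((hαmem n).1.trans hs.1) (lt_of_le_of_lt hs.2 (hαmem (n + 1)).2)
    exact ((hcont.comp ((continuous_id.smul continuous_const).continuousOn) hmaps)).norm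
  have hIcc_sub : ∀ n, Set.Icc (α n) (β (n + 1)) ⊆ Set.Icc (α n) (α (n + 1)) := by
    intro n
    exact Set.Icc_subset_Icc le_rfl (le_of_lt (horder n).2)
  have hIcc_sub' : ∀ n, Set.Icc (β (n + 1)) (α (n + 1)) ⊆ Set.Icc (α n) (α (n + 1)) := by
    intro n
    exact Set.Icc_subset_Icc (le_of_lt (horder n).1) le_rfl
  have hii1 : ∀ n, IntervalIntegrable g volume (α n) (β (n + 1)) := by
    intro n
    apply ContinuousOn.intervalIntegrable
    rw [Set.uIcc_of_le (le_of_lt (horder n).1)]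
    exact (hcontg n).mono (hIcc_sub n)
  have hii2 : ∀ n, IntervalIntegrable g volume (β (n + 1)) (α (n + 1)) := by
    intro n
    apply ContinuousOn.intervalIntegrable
    rw [Set.uIcc_of_le (le_of_lt (horder n).2)]
    exact (hcontg n).mono (hIcc_sub' n)
  have hint : ∀ n, IntegrableOn g (Set.Ioc (α n) (α (n + 1))) volume := by
    intro n
    exact ((hcontg n).integrableOn_Icc).mono_set Set.Ioc_subset_Icc_self
  -- variation bound on each segment
  have hvar : ∀ n, (∫ s in Set.Ioc (α n) (α (n + 1)), g s) ≤ 2 * (c₁ * M) := by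
    intro n
    rw [← intervalIntegral.integral_of_le (hle n),
      ← intervalIntegral.integral_add_adjacent_intervals (hii1 n) (hii2 n)]
    have := hvar₂ n
    have := hvar₁ n
    simp only [hgdef]
    linarith
  -- key pointwise + integral bound on each segment
  have key : ∀ n : ℕ, (∫⁻ s in Set.Ioc (α n) (α (n + 1)),
      ENNReal.ofReal (g s * Real.exp (b (s • x))))
      ≤ ENNReal.ofReal
          (2 * Real.exp (b 0 + 2 * c₁ * M) * c₁ * M * Real.exp (-(n * M / 2))) := by
    intro n
    set C : ℝ := Real.exp (b 0 + 2 * c₁ * M) * Real.exp (-(n * M / 2)) with hCdef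
    have hC0 : 0 ≤ C := le_of_lt (by positivity)
    have step1 : (∫⁻ s in Set.Ioc (α n) (α (n + 1)),
        ENNReal.ofReal (g s * Real.exp (b (s • x))))
        ≤ ∫⁻ s in Set.Ioc (α n) (α (n + 1)), ENNReal.ofReal (g s * C) := by
      apply setLIntegral_mono ((hmeas.mul_const C).ennreal_ofReal)
      intro s hs
      apply ENNReal.ofReal_le_ofReal
      apply mul_le_mul_of_nonneg_left _ (hg0 s)
      rw [hCdef, ← Real.exp_add]
      apply Real.exp_le_exp.2
      have := hseg n s (Set.Ioc_subset_Icc_self hs)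
      linarith
    have step2 : (∫⁻ s in Set.Ioc (α n) (α (n + 1)), ENNReal.ofReal (g s * C))
        = ENNReal.ofReal C * ∫⁻ s in Set.Ioc (α n) (α (n + 1)), ENNReal.ofReal (g s) := by
      rw [← lintegral_const_mul' _ _ ENNReal.ofReal_ne_top]
      congr 1
      ext s
      rw [← ENNReal.ofReal_mul hC0, mul_comm]
    have step3 : (∫⁻ s in Set.Ioc (α n) (α (n + 1)), ENNReal.ofReal (g s))
        = ENNReal.ofReal (∫ s in Set.Ioc (α n) (α (n + 1)), g s) := by
      rw [MeasureTheory.ofReal_integral_eq_lintegral_ofReal (hint n)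
        (Filter.Eventually.of_forall hg0)]
    calc (∫⁻ s in Set.Ioc (α n) (α (n + 1)),
        ENNReal.ofReal (g s * Real.exp (b (s • x))))
        ≤ ENNReal.ofReal C * ENNReal.ofReal (∫ s in Set.Ioc (α n) (α (n + 1)), g s) := by
          rw [← step3, ← step2]; exact step1
      _ ≤ ENNReal.ofReal C * ENNReal.ofReal (2 * (c₁ * M)) :=
          mul_le_mul_right (ENNReal.ofReal_le_ofReal (hvar n)) _
      _ = ENNReal.ofReal (C * (2 * (c₁ * M))) := (ENNReal.ofReal_mul hC0).symm
      _ = ENNReal.ofReal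
          (2 * Real.exp (b 0 + 2 * c₁ * M) * c₁ * M * Real.exp (-(n * M / 2))) := by
          rw [hCdef]; ring_nf
  -- covering (0,1) by the segments
  have hsub : Set.Ioo (0 : ℝ) 1 ⊆ ⋃ n : ℕ, Set.Ioc (α n) (α (n + 1)) := by
    intro s hs
    have hex : ∃ n, s ≤ α n := by
      have : ∀ᶠ n in Filter.atTop, s < α n :=
        hlim.eventually (eventually_gt_nhds hs.2)
      obtain ⟨n, hn⟩ := this.exists
      exact ⟨n, le_of_lt hn⟩
    set N := Nat.find hex with hN
    have hNspec : s ≤ α N := Nat.find_spec hex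
    have hNpos : N ≠ 0 := by
      intro h0
      rw [h0, hα0] at hNspec
      exact absurd hNspec (not_le.2 hs.1)
    obtain ⟨m, hm⟩ := Nat.exists_eq_succ_of_ne_zero hNpos
    have hmlt : α m < s := by
      have := Nat.find_min hex (by omega : m < N)
      linarith [not_le.1 this]
    refine Set.mem_iUnion.2 ⟨m, hmlt, ?_⟩
    rw [hm] at hNspec
    exact hNspec
  -- summability
  have hsumm : Summable fun n : ℕ => Real.exp (-(n * M / 2)) := by
    have heq : ∀ n : ℕ, Real.exp (-(n * M / 2)) = (Real.exp (-(M / 2))) ^ n := by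
      intro n
      rw [← Real.exp_nat_mul]
      ring_nf
    rw [funext heq]
    exact summable_geometric_of_lt_one (Real.exp_nonneg _)
      (Real.exp_lt_one_iff.2 (by linarith))
  have hnn : ∀ n : ℕ,
      0 ≤ 2 * Real.exp (b 0 + 2 * c₁ * M) * c₁ * M * Real.exp (-(n * M / 2)) := by
    intro n; positivity
  calc (∫⁻ s in Set.Ioc (0 : ℝ) 1,
      ENNReal.ofReal (‖fderiv ℝ b (s • x)‖ * Real.exp (b (s • x))))
      = ∫⁻ s in Set.Ioo (0 : ℝ) 1,
        ENNReal.ofReal (g s * Real.exp (b (s • x))) :=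
        (setLIntegral_congr MeasureTheory.Ioo_ae_eq_Ioc).symm
    _ ≤ ∫⁻ s in ⋃ n : ℕ, Set.Ioc (α n) (α (n + 1)),
        ENNReal.ofReal (g s * Real.exp (b (s • x))) := lintegral_mono_set hsub
    _ ≤ ∑' n : ℕ, ∫⁻ s in Set.Ioc (α n) (α (n + 1)),
        ENNReal.ofReal (g s * Real.exp (b (s • x))) := lintegral_iUnion_le _ _
    _ ≤ ∑' n : ℕ, ENNReal.ofReal
        (2 * Real.exp (b 0 + 2 * c₁ * M) * c₁ * M * Real.exp (-(n * M / 2))) :=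
        ENNReal.tsum_le_tsum key
    _ = ENNReal.ofReal (∑' n : ℕ,
        2 * Real.exp (b 0 + 2 * c₁ * M) * c₁ * M * Real.exp (-(n * M / 2))) :=
        (ENNReal.ofReal_tsum_of_nonneg hnn (hsumm.mul_left _)).symm
    _ = ENNReal.ofReal
        (2 * Real.exp (b 0 + 2 * c₁ * M) * c₁ * M *
          ∑' n : ℕ, Real.exp (-(n * M / 2))) := by
        rw [tsum_mul_left]
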